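/- For n ≥ 2, ζ = 2π/n, α ≥ 1, and integer k ≥ 1: s_k = k² s₁ - Σ_{l=1}^{k-1} l · s̄_{k-l}. -/

import Mathlib

open Finset

/-- The sum `s_k = 2^{-α} Σ_{j=1}^{n-1} sin²(kjζ/2)/sin^{α+1}(jζ/2)` with `ζ = 2π/n`. -/
noncomputable def sSum (n : ℕ) (α : ℝ) (k : ℕ) : ℝ :=
  2 ^ (-α) * ∑ j ∈ Finset.Icc 1 (n - 1),
    Real.sin (k * j * (2 * Real.pi / n) / 2) ^ 2 /
      Real.sin (j * (2 * Real.pi / n) / 2) ^ (α + 1)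

/-!
Termwise in `j`, with `θ = jζ/2`, the claim is the identity
`sin²(kθ) = k² sin²θ - 4 sin²θ Σ_{l<k} l sin²((k-l)θ)` multiplied by `2^{-α} / sin^{α+1}θ`,
since `2^{-(α-2)} / sin^{α-1}θ = 4 sin²θ · 2^{-α} / sin^{α+1}θ`. Both sides of the identity agree at
`k = 0, 1` and satisfy `u(k+2) - 2u(k+1) + u(k) = 2 sin²θ - 4 sin²θ sin²((k+1)θ)`: the left side by
`sin²(x+θ) + sin²(x-θ) = 2 sin²x + 2 sin²θ - 4 sin²x sin²θ`, the right side because the convolution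
has second difference `sin²((k+1)θ)`.
-/

namespace Finset

variable {R : Type*} [CommRing R]

theorem sum_range_sub_succ (g : ℕ → R) (k : ℕ) :
    ∑ l ∈ range (k + 1), g (k + 1 - l) = ∑ l ∈ range k, g (k - l) + g (k + 1) := by
  rw [sum_range_succ']
  simp only [Nat.add_sub_add_right, Nat.sub_zero]

theorem sum_range_mul_sub_succ (g : ℕ → R) (k : ℕ) :
    ∑ l ∈ range (k + 1), (l : R) * g (k + 1 - l)
      = ∑ l ∈ range k, (l : R) * g (k - l) + ∑ l ∈ range k, g (k - l) := by
  rw [sum_range_succ', ← sum_add_distrib]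
  simp only [Nat.add_sub_add_right, Nat.cast_succ, Nat.cast_zero, zero_mul, add_zero]
  exact sum_congr rfl fun l _ => by ring

theorem sum_Icc_one_pred_mul_eq_sum_range (f : ℕ → R) (k : ℕ) :
    ∑ l ∈ Icc 1 (k - 1), (l : R) * f l = ∑ l ∈ range k, (l : R) * f l := by
  refine sum_subset (fun l hl => ?_) (fun l hl hl' => ?_)
  · simp only [mem_Icc, mem_range] at hl ⊢
    omega
  · simp only [mem_Icc, mem_range, not_and, not_le] at hl hl'
    obtain rfl : l = 0 := by omega
    simp

end Finset

namespace Real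

theorem sin_sq_add_add_sin_sq_sub (x y : ℝ) :
    sin (x + y) ^ 2 + sin (x - y) ^ 2 = 2 * sin x ^ 2 + 2 * sin y ^ 2 - 4 * sin x ^ 2 * sin y ^ 2 := by
  rw [sin_add, sin_sub]
  linear_combination 2 * sin x ^ 2 * cos_sq_add_sin_sq y + 2 * sin y ^ 2 * cos_sq_add_sin_sq x

theorem sin_sq_nat_mul (θ : ℝ) (k : ℕ) :
    sin (k * θ) ^ 2
      = k ^ 2 * sin θ ^ 2 - 4 * sin θ ^ 2 * ∑ l ∈ Finset.range k, (l : ℝ) * sin ((k - l : ℕ) * θ) ^ 2 := by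
  set g : ℕ → ℝ := fun m => sin (m * θ) ^ 2
  show g k = k ^ 2 * sin θ ^ 2 - 4 * sin θ ^ 2 * ∑ l ∈ Finset.range k, (l : ℝ) * g (k - l)
  induction k using Nat.twoStepInduction with
  | zero => simp [g]
  | one => simp [g]
  | more k h₀ h₁ =>
    have hC₁ := Finset.sum_range_mul_sub_succ g k
    have hC₂ := Finset.sum_range_mul_sub_succ g (k + 1)
    have hD := Finset.sum_range_sub_succ g k
    have htrig := sin_sq_add_add_sin_sq_sub ((k + 1 : ℕ) * θ) θ
    simp only [g, Nat.cast_add, Nat.cast_one, Nat.cast_ofNat] at *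
    rw [show ((k : ℝ) + 1) * θ + θ = (k + 2) * θ by ring,
      show ((k : ℝ) + 1) * θ - θ = k * θ by ring] at htrig
    linear_combination htrig + 2 * h₁ - h₀ + 4 * sin θ ^ 2 * (hC₂ - hC₁ + hD)

theorem sin_sq_nat_mul_div_rpow {x : ℝ} (hx : 0 < sin x) (α : ℝ) (k : ℕ) :
    2 ^ (-α) * (sin (k * x) ^ 2 / sin x ^ (α + 1))
      = k ^ 2 * (2 ^ (-α) * (sin x ^ 2 / sin x ^ (α + 1)))
        - ∑ l ∈ Finset.Icc 1 (k - 1),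
            (l : ℝ) * (2 ^ (-(α - 2)) * (sin ((k - l : ℕ) * x) ^ 2 / sin x ^ (α - 2 + 1))) := by
  have hweight : (2 : ℝ) ^ (-(α - 2)) / sin x ^ (α - 2 + 1)
      = 4 * sin x ^ 2 * (2 ^ (-α) / sin x ^ (α + 1)) := by
    have h2 : (2 : ℝ) ^ (-(α - 2)) = 2 ^ (-α) * 2 ^ 2 := by
      rw [show -(α - 2) = -α + 2 by ring, rpow_add two_pos, rpow_two]
    have hsin : sin x ^ (α + 1) = sin x ^ (α - 2 + 1) * sin x ^ 2 := by
      rw [← rpow_two, ← rpow_add hx]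
      ring_nf
    rw [h2, hsin]
    field_simp
    norm_num
  have hsum : ∑ l ∈ Finset.range k,
        (l : ℝ) * (2 ^ (-(α - 2)) * (sin ((k - l : ℕ) * x) ^ 2 / sin x ^ (α - 2 + 1)))
      = 2 ^ (-(α - 2)) / sin x ^ (α - 2 + 1)
        * ∑ l ∈ Finset.range k, (l : ℝ) * sin ((k - l : ℕ) * x) ^ 2 := by
    rw [Finset.mul_sum]
    exact Finset.sum_congr rfl fun l _ => by ring
  rw [Finset.sum_Icc_one_pred_mul_eq_sum_range, hsum, hweight, sin_sq_nat_mul x k]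
  ring

theorem sin_nat_mul_two_pi_div_div_two_pos {n j : ℕ} (hj₀ : 0 < j) (hjn : j < n) :
    0 < sin (j * (2 * π / n) / 2) := by
  have hj₀' : (0 : ℝ) < j := by exact_mod_cast hj₀
  have hjn' : (j : ℝ) < n := by exact_mod_cast hjn
  rw [show j * (2 * π / n) / 2 = π * (j / n) by ring]
  exact sin_pos_of_pos_of_lt_pi (mul_pos pi_pos (div_pos hj₀' (hj₀'.trans hjn')))
    (mul_lt_of_lt_one_right pi_pos ((div_lt_one (hj₀'.trans hjn')).2 hjn'))

end Real

theorem stmt10_general (n : ℕ) (α : ℝ) (k : ℕ) :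
    sSum n α k
      = (k : ℝ) ^ 2 * sSum n α 1 - ∑ l ∈ Finset.Icc 1 (k - 1), (l : ℝ) * sSum n (α - 2) (k - l) := by
  simp only [sSum, Nat.cast_one, one_mul, mul_sum]
  rw [sum_comm, ← sum_sub_distrib]
  refine sum_congr rfl fun j hj => ?_
  obtain ⟨hj₀, hjn⟩ := mem_Icc.1 hj
  simp only [show ∀ m : ℕ, (m : ℝ) * j * (2 * Real.pi / n) / 2 = m * (j * (2 * Real.pi / n) / 2) from
    fun m => by ring]
  exact Real.sin_sq_nat_mul_div_rpow (Real.sin_nat_mul_two_pi_div_div_two_pos hj₀ (by omega)) α k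

theorem stmt10 (n : ℕ) (hn : 2 ≤ n) (α : ℝ) (hα : 1 ≤ α) (k : ℕ) (hk : 1 ≤ k) :
    sSum n α k
      = (k : ℝ) ^ 2 * sSum n α 1 - ∑ l ∈ Finset.Icc 1 (k - 1), (l : ℝ) * sSum n (α - 2) (k - l) :=
  stmt10_general n α k
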